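/- Let I ⊆ S = K[x_1,…,x_n] be a pretty k-clean monomial ideal. Then for every monomial u ∈ S with u ∉ I, the colon ideal I : u is pretty k-clean. -/

import Mathlib

open MvPolynomial

noncomputable section

namespace Arxiv1703

variable {K : Type*} [Field K] {σ : Type*}

/-- `I` is a monomial ideal: generated by a set of monomials. -/
def IsMonomialIdeal (I : Ideal (MvPolynomial σ K)) : Prop :=
  ∃ G : Set (σ →₀ ℕ),
    I = Ideal.span ((fun a => (monomial a 1 : MvPolynomial σ K)) '' G)

/-- `ass I = Ass (S/I)`, the associated primes of `S/I`. -/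
def ass (I : Ideal (MvPolynomial σ K)) : Set (Ideal (MvPolynomial σ K)) :=
  associatedPrimes (MvPolynomial σ K) (MvPolynomial σ K ⧸ I)

/-- the minimal members (under inclusion) of a set of ideals. -/
def minSet (A : Set (Ideal (MvPolynomial σ K))) : Set (Ideal (MvPolynomial σ K)) :=
  {P | P ∈ A ∧ ∀ Q ∈ A, Q ≤ P → Q = P}

/-- `u` is a pretty cleaner monomial of `I`. -/
def IsPrettyCleaner (I : Ideal (MvPolynomial σ K)) (u : MvPolynomial σ K) : Prop :=
  ∀ P ∈ ass (I.colon (Ideal.span {u})), ∀ Q ∈ ass (I ⊔ Ideal.span {u}), P ≤ Q → P = Q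

/-- `u` is a cleaner monomial of `I`: `min(ass(I + Su)) ⊆ min(ass I)`. -/
def IsCleaner (I : Ideal (MvPolynomial σ K)) (u : MvPolynomial σ K) : Prop :=
  minSet (ass (I ⊔ Ideal.span {u})) ⊆ minSet (ass I)

/-- `I` is pretty `k`-clean (well-founded recursive definition, as inductive predicate). -/
inductive PrettyKClean (k : ℕ) : Ideal (MvPolynomial σ K) → Prop
  | prime (I : Ideal (MvPolynomial σ K)) (h : I.IsPrime) : PrettyKClean k I
  | step (I : Ideal (MvPolynomial σ K)) (a : σ →₀ ℕ) (ha : a ≠ 0)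
      (hu : (monomial a 1 : MvPolynomial σ K) ∉ I)
      (hsupp : a.support.card ≤ k + 1)
      (hcl : IsPrettyCleaner I (monomial a 1))
      (h1 : PrettyKClean k (I.colon ((Ideal.span {monomial a 1} : Ideal (MvPolynomial σ K)) : Set (MvPolynomial σ K))))
      (h2 : PrettyKClean k (I ⊔ Ideal.span {monomial a 1})) : PrettyKClean k I

/-- `I` is `k`-clean. -/
inductive KClean (k : ℕ) : Ideal (MvPolynomial σ K) → Prop
  | prime (I : Ideal (MvPolynomial σ K)) (h : I.IsPrime) : KClean k I
  | step (I : Ideal (MvPolynomial σ K)) (a : σ →₀ ℕ) (ha : a ≠ 0)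
      (hu : (monomial a 1 : MvPolynomial σ K) ∉ I)
      (hne : ass I = I.minimalPrimes)
      (hsupp : a.support.card ≤ k + 1)
      (hcl : IsCleaner I (monomial a 1))
      (h1 : KClean k (I.colon ((Ideal.span {monomial a 1} : Ideal (MvPolynomial σ K)) : Set (MvPolynomial σ K))))
      (h2 : KClean k (I ⊔ Ideal.span {monomial a 1})) : KClean k I

/-- `I` is pretty clean: it admits a pretty clean prime filtration by monomial ideals. -/
def IsPrettyClean (I : Ideal (MvPolynomial σ K)) : Prop :=
  ∃ (r : ℕ) (c : Fin (r + 1) → Ideal (MvPolynomial σ K))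
    (P : Fin r → Ideal (MvPolynomial σ K)),
    c 0 = I ∧ c (Fin.last r) = ⊤ ∧
    (∀ i, IsMonomialIdeal (c i)) ∧
    (∀ i : Fin r, c i.castSucc < c i.succ) ∧
    (∀ i : Fin r, (P i).IsPrime) ∧
    (∀ i : Fin r, Nonempty
      ((↥(c i.succ) ⧸ Submodule.comap (Submodule.subtype (c i.succ)) (c i.castSucc))
        ≃ₗ[MvPolynomial σ K] (MvPolynomial σ K ⧸ P i))) ∧
    (∀ i j : Fin r, i < j → P i ≤ P j → P i = P j)

/-! ### Multicomplexes -/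

variable {ι : Type*}

/-- `Γ ⊆ ℕ∞^ι` is a multicomplex. -/
def IsMulticomplex (Γ : Set (ι → ENat)) : Prop :=
  (∀ a ∈ Γ, ∀ b ≤ a, b ∈ Γ) ∧
  (∀ a ∈ Γ, ∃ m ∈ Γ, a ≤ m ∧ ∀ c ∈ Γ, m ≤ c → m = c)

/-- `M(Γ)`, the maximal elements of `Γ`. -/
def maxElts (Γ : Set (ι → ENat)) : Set (ι → ENat) :=
  {m | m ∈ Γ ∧ ∀ c ∈ Γ, m ≤ c → m = c}

def infpt (a : ι → ENat) : Set ι := {i | a i = ⊤}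
def fpt (a : ι → ENat) : Set ι := {i | a i ≠ ⊤}
def fptStar (a : ι → ENat) : Set ι := {i | a i ≠ 0 ∧ a i ≠ ⊤}

/-- the facets of `Γ`. -/
def facets (Γ : Set (ι → ENat)) : Set (ι → ENat) :=
  {a | a ∈ Γ ∧ ∀ m ∈ maxElts Γ, a ≤ m → infpt a = infpt m}

/-- `⟨A⟩`, the smallest multicomplex containing `A` (the order ideal generated by `A`). -/
def mcSpan (A : Set (ι → ENat)) : Set (ι → ENat) := {b | ∃ a ∈ A, b ≤ a}

def star (Γ : Set (ι → ENat)) (a : ι → ENat) : Set (ι → ENat) :=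
  mcSpan {b | b ∈ facets Γ ∧ a ≤ b}

def del (Γ : Set (ι → ENat)) (a : ι → ENat) : Set (ι → ENat) :=
  mcSpan {b | b ∈ facets Γ ∧ ¬ a ≤ b}

def link (Γ : Set (ι → ENat)) (a : ι → ENat) : Set (ι → ENat) :=
  mcSpan ((fun b => b - a) '' {b | b ∈ facets Γ ∧ a ≤ b})

/-- view a vector of naturals as a face in `ℕ∞^ι`. -/
def natFace (a : ι → ℕ) : ι → ENat := fun i => (a i : ENat)

/-- `T` is a Stanley set of degree `a`, i.e. `T = a + ⟨m⟩` for some `m ∈ {0,∞}^ι`. -/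
def IsStanleySet (a : ι → ℕ) (T : Set (ι → ENat)) : Prop :=
  ∃ m : ι → ENat, (∀ i, m i = 0 ∨ m i = ⊤) ∧
    T = (fun b => natFace a + b) '' mcSpan {m}

/-- `a ∈ Γ ∩ ℕ^ι` is a shedding face of `Γ`. -/
def IsSheddingFace (Γ : Set (ι → ENat)) (a : ι → ℕ) : Prop :=
  natFace a ∈ Γ ∧
  (∀ b ∈ facets (star Γ (natFace a)),
    IsStanleySet a (mcSpan {b} \ del Γ (natFace a))) ∧
  (∀ b ∈ facets (star Γ (natFace a)), ∀ c ∈ facets (del Γ (natFace a)),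
    fpt b ⊆ fpt c → fpt b = fpt c)

/-- `Γ` is a `k`-decomposable multicomplex. -/
inductive MCKDecomposable (k : ℕ) : Set (ι → ENat) → Prop
  | single (Γ : Set (ι → ENat)) (h : ∃! a, a ∈ facets Γ) : MCKDecomposable k Γ
  | shed (Γ : Set (ι → ENat)) (a : ι → ℕ)
      (ha : IsSheddingFace Γ a)
      (hcard : (fptStar (natFace a)).ncard ≤ k + 1)
      (h1 : MCKDecomposable k (link Γ (natFace a)))
      (h2 : MCKDecomposable k (del Γ (natFace a))) : MCKDecomposable k Γ

/-- `Γ` is a shellable multicomplex. -/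
def Shellable (Γ : Set (ι → ENat)) : Prop :=
  ∃ (r : ℕ) (a : Fin r → (ι → ENat)), Function.Injective a ∧ facets Γ = Set.range a ∧
    ∃ (b : Fin r → (ι → ℕ)) (m : Fin r → (ι → ENat)),
      (∀ i j, m i j = 0 ∨ m i j = ⊤) ∧
      (∀ i : Fin r, mcSpan {a i} \ mcSpan (a '' {j | j < i})
        = (fun c => natFace (b i) + c) '' mcSpan {m i}) ∧
      (∀ i j : Fin r, mcSpan {m i} ⊆ mcSpan {m j} →
        mcSpan {m i} = mcSpan {m j} ∨ j < i)

/-- the join of two multicomplexes. -/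
def mcJoin (Γ₁ Γ₂ : Set (ι → ENat)) : Set (ι → ENat) :=
  {c | ∃ a ∈ Γ₁, ∃ b ∈ Γ₂, c = a + b}

/-- two multicomplexes in `ℕ∞^n` are disjoint. -/
def mcDisjoint {n : ℕ} (Γ₁ Γ₂ : Set (Fin n → ENat)) : Prop :=
  ∃ m : ℕ, 1 < m ∧ m < n ∧
    (∀ a ∈ Γ₁, ∀ i : Fin n, m < (i : ℕ) + 1 → a i = 0) ∧
    (∀ a ∈ Γ₂, ∀ i : Fin n, (i : ℕ) + 1 ≤ m → a i = 0)

/-! ### Simplicial complexes -/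

variable {V : Type*} [DecidableEq V]

def IsSimplicialComplex (Δ : Set (Finset V)) : Prop :=
  ∀ s ∈ Δ, ∀ t ⊆ s, t ∈ Δ

def sFacets (Δ : Set (Finset V)) : Set (Finset V) :=
  {s | s ∈ Δ ∧ ∀ t ∈ Δ, s ⊆ t → s = t}

def sDel (Δ : Set (Finset V)) (s : Finset V) : Set (Finset V) :=
  {t | t ∈ Δ ∧ ¬ s ⊆ t}

def sLink (Δ : Set (Finset V)) (s : Finset V) : Set (Finset V) :=
  {t | t ∈ Δ ∧ t ∩ s = ∅ ∧ t ∪ s ∈ Δ}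

/-- `s` is a shedding face of `Δ`. -/
def sShedding (Δ : Set (Finset V)) (s : Finset V) : Prop :=
  ∀ t ∈ Δ, s ⊆ t → ∀ v ∈ s, ∃ w, w ∉ t ∧ (insert w t).erase v ∈ Δ

/-- `Δ` is a `k`-decomposable simplicial complex. -/
inductive SCKDecomposable (k : ℕ) : Set (Finset V) → Prop
  | simplex (s : Finset V) : SCKDecomposable k {t | t ⊆ s}
  | void : SCKDecomposable k (∅ : Set (Finset V))
  | empty : SCKDecomposable k ({∅} : Set (Finset V))
  | shed (Δ : Set (Finset V)) (s : Finset V) (hs : s ∈ Δ) (hcard : s.card ≤ k + 1)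
      (hshed : sShedding Δ s)
      (h1 : SCKDecomposable k (sDel Δ s))
      (h2 : SCKDecomposable k (sLink Δ s)) : SCKDecomposable k Δ

/-- the join of two simplicial complexes. -/
def sJoin (Δ₁ Δ₂ : Set (Finset V)) : Set (Finset V) :=
  {u | ∃ s ∈ Δ₁, ∃ t ∈ Δ₂, u = s ∪ t}

/-- `a_F`: the `{0,∞}`-vector of a subset `F ⊆ [n]`. -/
def faceOfFinset {n : ℕ} (F : Finset (Fin n)) : Fin n → ENat :=
  fun i => if i ∈ F then (⊤ : ENat) else 0

/-! ### The correspondence between multicomplexes and monomial ideals -/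

/-- `I(Γ)`: the monomial ideal associated to a multicomplex `Γ`. -/
def idealOf (K : Type*) [Field K] {σ : Type*} (Γ : Set (σ → ENat)) :
    Ideal (MvPolynomial σ K) :=
  Ideal.span {p | ∃ a : σ →₀ ℕ, natFace ⇑a ∉ Γ ∧ p = monomial a 1}

/-- `Γ(I)`: the multicomplex associated to a monomial ideal `I`. -/
def gammaOf {K : Type*} [Field K] {σ : Type*} (I : Ideal (MvPolynomial σ K)) :
    Set (σ → ENat) :=
  {c | ∀ b : σ →₀ ℕ, natFace ⇑b ≤ c → (monomial b 1 : MvPolynomial σ K) ∉ I}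

/-! ### Polarization -/

/-- the index type of the variables of the polarized ring. -/
abbrev polarType {n r : ℕ} (g : Fin r → (Fin n →₀ ℕ)) : Type :=
  (j : Fin n) × Fin (Finset.univ.sup fun i => g i j)

/-- the exponent vector of the polarization `v_i` of the generator `u_i = x^(g i)`. -/
def polarExp {n r : ℕ} (g : Fin r → (Fin n →₀ ℕ)) (i : Fin r) : polarType g →₀ ℕ :=
  Finsupp.equivFunOnFinite.symm fun p => if (p.2 : ℕ) < g i p.1 then 1 else 0

/-- the polarization `I^p` of the monomial ideal minimally generated by the `x^(g i)`. -/
def polarIdeal (K : Type*) [Field K] {n r : ℕ} (g : Fin r → (Fin n →₀ ℕ)) :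
    Ideal (MvPolynomial (polarType g) K) :=
  Ideal.span (Set.range fun i => (monomial (polarExp g i) 1 : MvPolynomial (polarType g) K))


section Aux

variable {K : Type*} [Field K] {σ : Type*}

theorem mem_monomialSpan_iff {G : Set (σ →₀ ℕ)} {p : MvPolynomial σ K} :
    p ∈ Ideal.span ((fun a => (monomial a 1 : MvPolynomial σ K)) '' G) ↔
      ∀ m ∈ p.support, ∃ g ∈ G, g ≤ m := by
  classical
  constructor
  · intro hp
    refine Submodule.span_induction (p := fun x _ => ∀ m ∈ x.support, ∃ g ∈ G, g ≤ m)
      ?_ ?_ ?_ ?_ hp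
    · rintro x ⟨g, hg, rfl⟩ m hm
      rw [MvPolynomial.support_monomial, if_neg (one_ne_zero (α := K))] at hm
      exact ⟨g, hg, (Finset.mem_singleton.1 hm).ge⟩
    · simp
    · intro x y _ _ hx hy m hm
      rcases Finset.mem_union.1 (MvPolynomial.support_add hm) with h | h
      exacts [hx m h, hy m h]
    · intro c x _ hx m hm
      rw [smul_eq_mul] at hm
      obtain ⟨m₁, hm₁, m₂, hm₂, rfl⟩ := Finset.mem_add.1 (MvPolynomial.support_mul c x hm)
      obtain ⟨g, hg, hle⟩ := hx m₂ hm₂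
      exact ⟨g, hg, hle.trans le_add_self⟩
  · intro h
    rw [MvPolynomial.as_sum p]
    apply Ideal.sum_mem
    intro m hm
    obtain ⟨g, hg, hle⟩ := h m hm
    have hmc : (monomial m (coeff m p) : MvPolynomial σ K)
        = monomial (m - g) (coeff m p) * monomial g 1 := by
      rw [monomial_mul, mul_one, tsub_add_cancel_of_le hle]
    rw [hmc]
    exact Ideal.mul_mem_left _ _ (Ideal.subset_span ⟨g, hg, rfl⟩)

theorem monomial_mem_monomialSpan_iff {G : Set (σ →₀ ℕ)} {b : σ →₀ ℕ} :
    (monomial b 1 : MvPolynomial σ K) ∈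
      Ideal.span ((fun a => (monomial a 1 : MvPolynomial σ K)) '' G) ↔
      ∃ g ∈ G, g ≤ b := by
  classical
  rw [mem_monomialSpan_iff, MvPolynomial.support_monomial, if_neg (one_ne_zero (α := K))]
  simp

theorem colon_monomialSpan (G : Set (σ →₀ ℕ)) (a : σ →₀ ℕ) :
    (Ideal.span ((fun a => (monomial a 1 : MvPolynomial σ K)) '' G)).colon
        (Ideal.span {(monomial a 1 : MvPolynomial σ K)}) =
      Ideal.span ((fun a => (monomial a 1 : MvPolynomial σ K)) '' ((· - a) '' G)) := by
  classical
  ext p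
  rw [Ideal.mem_colon_span_singleton, mem_monomialSpan_iff, mem_monomialSpan_iff]
  constructor
  · intro h m hm
    have hmem : a + m ∈ (p * monomial a 1).support := by
      rw [MvPolynomial.mem_support_iff, mul_comm, coeff_monomial_mul, one_mul]
      exact MvPolynomial.mem_support_iff.1 hm
    obtain ⟨g, hg, hle⟩ := h _ hmem
    exact ⟨g - a, ⟨g, hg, rfl⟩, tsub_le_iff_left.2 hle⟩
  · intro h m hm
    rw [MvPolynomial.mem_support_iff, mul_comm, coeff_monomial_mul', one_mul] at hm
    split_ifs at hm with hle
    · obtain ⟨g', ⟨g, hg, rfl⟩, hle'⟩ := h (m - a) (MvPolynomial.mem_support_iff.2 hm)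
      refine ⟨g, hg, ?_⟩
      have : g ≤ a + (m - a) := tsub_le_iff_left.1 hle'
      rwa [add_tsub_cancel_of_le hle] at this
    · exact absurd rfl hm

theorem monomialSpan_sup (G : Set (σ →₀ ℕ)) (b : σ →₀ ℕ) :
    Ideal.span ((fun a => (monomial a 1 : MvPolynomial σ K)) '' G) ⊔
        Ideal.span {monomial b 1} =
      Ideal.span ((fun a => (monomial a 1 : MvPolynomial σ K)) '' (G ∪ {b})) := by
  rw [Set.image_union, Set.image_singleton, Ideal.span_union]

theorem colon_colon_eq {R : Type*} [CommRing R] (I : Ideal R) (x y : R) :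
    (I.colon (Ideal.span {x})).colon (Ideal.span {y}) = I.colon (Ideal.span {x * y}) := by
  ext r
  rw [Ideal.mem_colon_span_singleton, Ideal.mem_colon_span_singleton, Ideal.mem_colon_span_singleton]
  rw [mul_assoc, mul_comm y x]

theorem colon_of_prime {R : Type*} [CommRing R] {P : Ideal R} (hP : P.IsPrime) {u : R}
    (hu : u ∉ P) : P.colon (Ideal.span {u}) = P := by
  ext r
  rw [Ideal.mem_colon_span_singleton]
  exact ⟨fun h => ((hP.mem_or_mem h).resolve_right hu), fun h => Ideal.mul_mem_right _ _ h⟩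

theorem ass_colon_subset (J : Ideal (MvPolynomial σ K)) (u : MvPolynomial σ K) :
    ass (J.colon (Ideal.span {u})) ⊆ ass J := by
  intro P hP
  let f0 : MvPolynomial σ K →ₗ[MvPolynomial σ K] (MvPolynomial σ K ⧸ J) :=
    LinearMap.toSpanSingleton _ _ (Submodule.mkQ J u)
  have hker : LinearMap.ker f0 = J.colon (Ideal.span {u}) := by
    ext r
    rw [LinearMap.mem_ker, LinearMap.toSpanSingleton_apply, ← map_smul,
      Submodule.mkQ_apply, Submodule.Quotient.mk_eq_zero, smul_eq_mul,
      Ideal.mem_colon_span_singleton]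
  have hinj : Function.Injective
      ((J.colon (Ideal.span {u})).liftQ f0 hker.ge) := by
    rw [← LinearMap.ker_eq_bot]
    exact Submodule.ker_liftQ_eq_bot _ _ _ hker.le
  exact hP.map_of_injective _ hinj

end Aux

/-- colon of a pretty `k`-clean monomial ideal by a monomial is pretty `k`-clean. -/
theorem prettyKClean_colon {K : Type*} [Field K] {n : ℕ} (k : ℕ)
    (I : Ideal (MvPolynomial (Fin n) K)) (hI : IsMonomialIdeal I)
    (h : PrettyKClean k I) (a : Fin n →₀ ℕ)
    (hu : (monomial a 1 : MvPolynomial (Fin n) K) ∉ I) :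
    PrettyKClean k (I.colon ((Ideal.span {monomial a 1} : Ideal (MvPolynomial (Fin n) K)) : Set (MvPolynomial (Fin n) K))) := by
  have hmul : ∀ s t : Fin n →₀ ℕ,
      (monomial s 1 : MvPolynomial (Fin n) K) * monomial t 1 = monomial (s + t) 1 := by
    intro s t; rw [monomial_mul, one_mul]
  have H : ∀ J : Ideal (MvPolynomial (Fin n) K), PrettyKClean k J → IsMonomialIdeal J →
      ∀ c : Fin n →₀ ℕ, (monomial c 1 : MvPolynomial (Fin n) K) ∉ J →
      PrettyKClean k (J.colon (Ideal.span {(monomial c 1 : MvPolynomial (Fin n) K)})) := by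
    intro J hJ
    induction hJ with
    | prime J hp =>
      intro _ c hc
      rw [colon_of_prime hp hc]
      exact PrettyKClean.prime J hp
    | step J b hb hvb hsupp' hcl h1 h2 ih1 ih2 =>
      intro hJ' a hu
      obtain ⟨G, rfl⟩ := hJ'
      have hIv : IsMonomialIdeal
          ((Ideal.span ((fun a => (monomial a 1 : MvPolynomial (Fin n) K)) '' G)).colon
            (Ideal.span {(monomial b 1 : MvPolynomial (Fin n) K)})) := ⟨_, colon_monomialSpan G b⟩
      have hIplus : IsMonomialIdeal
          (Ideal.span ((fun a => (monomial a 1 : MvPolynomial (Fin n) K)) '' G) ⊔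
            Ideal.span {monomial b 1}) := ⟨_, monomialSpan_sup G b⟩
      by_cases hba : b ≤ a
      · -- v divides u
        have key : (Ideal.span ((fun a => (monomial a 1 : MvPolynomial (Fin n) K)) '' G)).colon
              (Ideal.span {(monomial a 1 : MvPolynomial (Fin n) K)}) =
            ((Ideal.span ((fun a => (monomial a 1 : MvPolynomial (Fin n) K)) '' G)).colon
              (Ideal.span {(monomial b 1 : MvPolynomial (Fin n) K)})).colon (Ideal.span {(monomial (a - b) 1 : MvPolynomial (Fin n) K)}) := by
          rw [colon_colon_eq, hmul, add_tsub_cancel_of_le hba]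
        rw [key]
        refine ih1 hIv (a - b) ?_
        rw [Ideal.mem_colon_span_singleton, hmul]
        rwa [tsub_add_cancel_of_le hba]
      · have hUnot : (monomial a 1 : MvPolynomial (Fin n) K) ∉
            Ideal.span ((fun a => (monomial a 1 : MvPolynomial (Fin n) K)) '' G) ⊔
              Ideal.span {monomial b 1} := by
          rw [monomialSpan_sup, monomial_mem_monomialSpan_iff]
          rintro ⟨g, hg | hg, hle⟩
          · exact hu (monomial_mem_monomialSpan_iff.2 ⟨g, hg, hle⟩)
          · exact hba (hg ▸ hle)
        have hsame : a + (b - a) = b + (a - b) := by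
          ext i
          simp only [Finsupp.add_apply, Finsupp.tsub_apply]
          omega
        have eqB : (Ideal.span ((fun a => (monomial a 1 : MvPolynomial (Fin n) K)) '' G)).colon
              (Ideal.span {(monomial a 1 : MvPolynomial (Fin n) K)}) ⊔ Ideal.span {monomial (b - a) 1} =
            (Ideal.span ((fun a => (monomial a 1 : MvPolynomial (Fin n) K)) '' G) ⊔
              Ideal.span {monomial b 1}).colon (Ideal.span {(monomial a 1 : MvPolynomial (Fin n) K)}) := by
          rw [monomialSpan_sup G b, colon_monomialSpan (G ∪ {b}) a, Set.image_union,
            Set.image_singleton, ← monomialSpan_sup ((· - a) '' G) (b - a),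
            ← colon_monomialSpan G a]
        by_cases hin : (monomial (a + (b - a)) 1 : MvPolynomial (Fin n) K) ∈
            Ideal.span ((fun a => (monomial a 1 : MvPolynomial (Fin n) K)) '' G)
        · -- lcm(u,v) ∈ I : then I : u = (I + Sv) : u
          have hmem : (monomial (b - a) 1 : MvPolynomial (Fin n) K) ∈
              (Ideal.span ((fun a => (monomial a 1 : MvPolynomial (Fin n) K)) '' G)).colon
                (Ideal.span {(monomial a 1 : MvPolynomial (Fin n) K)}) := by
            rw [Ideal.mem_colon_span_singleton, hmul, show b - a + a = a + (b - a) from add_comm _ _]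
            exact hin
          have key : (Ideal.span ((fun a => (monomial a 1 : MvPolynomial (Fin n) K)) '' G)).colon
                (Ideal.span {(monomial a 1 : MvPolynomial (Fin n) K)}) =
              (Ideal.span ((fun a => (monomial a 1 : MvPolynomial (Fin n) K)) '' G) ⊔
                Ideal.span {monomial b 1}).colon (Ideal.span {(monomial a 1 : MvPolynomial (Fin n) K)}) := by
            apply le_antisymm
            · intro r hr
              rw [Ideal.mem_colon_span_singleton] at hr ⊢
              exact Ideal.mem_sup_left hr
            · rw [← eqB]
              exact sup_le le_rfl (Ideal.span_le.2 (Set.singleton_subset_iff.2 hmem))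
          rw [key]
          exact ih2 hIplus a hUnot
        · -- lcm(u,v) ∉ I : step with cleaner monomial (b - a)
          have eqA : ((Ideal.span ((fun a => (monomial a 1 : MvPolynomial (Fin n) K)) '' G)).colon
                (Ideal.span {(monomial a 1 : MvPolynomial (Fin n) K)})).colon (Ideal.span {(monomial (b - a) 1 : MvPolynomial (Fin n) K)}) =
              ((Ideal.span ((fun a => (monomial a 1 : MvPolynomial (Fin n) K)) '' G)).colon
                (Ideal.span {(monomial b 1 : MvPolynomial (Fin n) K)})).colon (Ideal.span {(monomial (a - b) 1 : MvPolynomial (Fin n) K)}) := by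
            rw [colon_colon_eq, colon_colon_eq, hmul, hmul, hsame]
          refine PrettyKClean.step _ (b - a) ?_ ?_ ?_ ?_ ?_ ?_
          · intro h0
            exact hba (tsub_eq_zero_iff_le.1 h0)
          · rw [Ideal.mem_colon_span_singleton, hmul, show b - a + a = a + (b - a) from add_comm _ _]
            exact hin
          · exact le_trans (Finset.card_le_card Finsupp.support_tsub) hsupp'
          · intro P hP Q hQ hPQ
            rw [eqA] at hP
            rw [eqB] at hQ
            exact hcl P (ass_colon_subset _ _ hP) Q (ass_colon_subset _ _ hQ) hPQ
          · rw [eqA]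
            refine ih1 hIv (a - b) ?_
            rw [Ideal.mem_colon_span_singleton, hmul,
              show a - b + b = a + (b - a) from (add_comm _ _).trans hsame.symm]
            exact hin
          · rw [eqB]
            exact ih2 hIplus a hUnot
  exact H I h hI a hu

end Arxiv1703
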